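/- Assume Hypotheses (H) and (H'). Let (f_n) ⊂ C_b(ℝ^d;ℝ^m) be bounded in sup-norm and converge locally uniformly on ℝ^d to f ∈ C_b(ℝ^d;ℝ^m). For each t ∈ I and g ∈ C_b(ℝ^d;ℝ^m) let (T_t(τ)g)(x) := u(τ,x), where u is the unique classical solution, bounded on every strip, of D_τ u = 𝒜(t)u on (0,∞)×ℝ^d with u(0,·) = g (coefficients frozen at time t). Then the functions (t,τ,x) ↦ (T_t(τ)f_n)(x) converge, as n → ∞, to (t,τ,x) ↦ (T_t(τ)f)(x) locally uniformly on I×(0,∞)×ℝ^d. -/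

import Mathlib

open Set Filter Metric MeasureTheory
open scoped BigOperators Topology

noncomputable section

/-- Euclidean space `ℝ^d`. -/
abbrev Euc (d : ℕ) := EuclideanSpace ℝ (Fin d)

variable {d m : ℕ}

/-- First-order spatial partial derivative. -/
def pd (i : Fin d) (f : Euc d → ℝ) (x : Euc d) : ℝ :=
  fderiv ℝ f x (EuclideanSpace.single i 1)

/-- Second-order spatial partial derivative. -/
def pd2 (i j : Fin d) (f : Euc d → ℝ) (x : Euc d) : ℝ :=
  fderiv ℝ (fun y => pd j f y) x (EuclideanSpace.single i 1)

/-- The weakly coupled elliptic operator `𝒜(t)` with diffusion coefficients `Q`,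
drift coefficients `b` and potential matrix `c`, acting on `ζ : ℝ^d → ℝ^m`. -/
def opA (Q : Fin m → ℝ → Euc d → Fin d → Fin d → ℝ)
    (b : Fin m → ℝ → Euc d → Fin d → ℝ)
    (c : ℝ → Euc d → Fin m → Fin m → ℝ)
    (t : ℝ) (ζ : Euc d → Fin m → ℝ) (x : Euc d) (k : Fin m) : ℝ :=
  (∑ i, ∑ j, Q k t x i j * pd2 i j (fun y => ζ y k) x)
    + (∑ j, b k t x j * pd j (fun y => ζ y k) x)
    + (∑ h, c t x k h * ζ x h)

/-- The matrix `C^P`: diagonal entries of `C`, absolute values off the diagonal. -/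
def CP (c : ℝ → Euc d → Fin m → Fin m → ℝ) :
    ℝ → Euc d → Fin m → Fin m → ℝ :=
  fun t x k h => if k = h then c t x k h else |c t x k h|

/-- Smallest eigenvalue of a (symmetric) matrix, via the Rayleigh quotient. -/
def minEig (A : Fin d → Fin d → ℝ) : ℝ :=
  sInf {r : ℝ | ∃ ξ : Euc d, ‖ξ‖ = 1 ∧ r = ∑ i, ∑ j, A i j * ξ i * ξ j}

/-- Local parabolic `(α/2, α)`-Hölder continuity on `I × ℝ^d`. -/
def LocParHolder {F : Type*} [NormedAddCommGroup F] (α : ℝ) (I : Set ℝ)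
    (f : ℝ → Euc d → F) : Prop :=
  ∀ K : Set (ℝ × Euc d), K ⊆ I ×ˢ (univ : Set (Euc d)) → IsCompact K →
    ∃ L : ℝ, ∀ p ∈ K, ∀ q ∈ K,
      ‖f p.1 p.2 - f q.1 q.2‖ ≤ L * (|p.1 - q.1| ^ (α / 2) + ‖p.2 - q.2‖ ^ α)

/-- `I` is a right half-line (possibly all of `ℝ`). -/
def IsRightHalfline (I : Set ℝ) : Prop := (∃ a, I = Ici a) ∨ I = univ

/-- Hypotheses (H). -/
structure Hyp (I : Set ℝ)
    (Q : Fin m → ℝ → Euc d → Fin d → Fin d → ℝ)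
    (b : Fin m → ℝ → Euc d → Fin d → ℝ)
    (c : ℝ → Euc d → Fin m → Fin m → ℝ) : Prop where
  symm : ∀ k t x i j, Q k t x i j = Q k t x j i
  holder : ∃ α ∈ Ioo (0:ℝ) 1,
      (∀ k i j, LocParHolder α I (fun t x => Q k t x i j)) ∧
      (∀ k j, LocParHolder α I (fun t x => b k t x j)) ∧
      (∀ k h, LocParHolder α I (fun t x => c t x k h))
  ellipt : ∀ J : Set ℝ, J ⊆ I → Bornology.IsBounded J →
      ∀ k, ∃ μ0 > 0, ∀ t ∈ J, ∀ x : Euc d, μ0 ≤ minEig (Q k t x)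
  lyap : ∀ J : Set ℝ, J ⊆ I → Bornology.IsBounded J →
      ∃ φ : Euc d → Fin m → ℝ, ∃ lam > 0,
        (∀ k, ContDiff ℝ 2 (fun x => φ x k)) ∧
        (∀ x k, 0 < φ x k) ∧
        (∀ k, Tendsto (fun x => φ x k) (cocompact (Euc d)) atTop) ∧
        (∀ t ∈ J, ∀ x k, opA Q b (CP c) t φ x k ≤ lam * φ x k)
  irred : ¬ ∃ K : Set (Fin m), K.Nonempty ∧ K ≠ univ ∧
      ∀ i ∈ K, ∀ j ∉ K, ∀ t ∈ I, ∀ x : Euc d, c t x i j = 0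
  rowBdd : ∀ J : Set ℝ, J ⊆ I → Bornology.IsBounded J →
      ∃ M : ℝ, ∀ t ∈ J, ∀ x : Euc d, ∀ k, (∑ j, CP c t x k j) ≤ M

/-- `f` is bounded and continuous (membership in `C_b(ℝ^d; ℝ^m)`). -/
def IsBddContinuous (f : Euc d → Fin m → ℝ) : Prop :=
  Continuous f ∧ ∃ F, ∀ x k, |f x k| ≤ F

/-- Classical solution of the Cauchy problem for the operator with coefficients
`Q, b, c`, datum `f` at time `s`. -/
def ClassicalSol (Q : Fin m → ℝ → Euc d → Fin d → Fin d → ℝ)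
    (b : Fin m → ℝ → Euc d → Fin d → ℝ)
    (c : ℝ → Euc d → Fin m → Fin m → ℝ)
    (s : ℝ) (f : Euc d → Fin m → ℝ) (u : ℝ → Euc d → Fin m → ℝ) : Prop :=
  ContinuousOn (fun p : ℝ × Euc d => u p.1 p.2) (Ici s ×ˢ (univ : Set (Euc d))) ∧
  (∀ x, u s x = f x) ∧
  (∀ t ∈ Ioi s, ∀ k, ContDiff ℝ 2 (fun x => u t x k)) ∧
  (∀ t ∈ Ioi s, ∀ x k, HasDerivAt (fun r => u r x k) (opA Q b c t (u t) x k) t)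

/-- Bounded on every strip `[s,T] × ℝ^d`. -/
def BddOnStrips (s : ℝ) (u : ℝ → Euc d → Fin m → ℝ) : Prop :=
  ∀ T > s, ∃ K, ∀ t ∈ Icc s T, ∀ x k, |u t x k| ≤ K

/-- Hypotheses (H') relative to the bounded interval `[s,T] ⊆ I`. -/
def HypPrime (I : Set ℝ)
    (Q : Fin m → ℝ → Euc d → Fin d → Fin d → ℝ)
    (b : Fin m → ℝ → Euc d → Fin d → ℝ)
    (c : ℝ → Euc d → Fin m → Fin m → ℝ)
    (s T : ℝ) : Prop :=
  -- (i): third-order spatial regularity, with locally parabolic-Hölder derivatives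
  (∃ α ∈ Ioo (0:ℝ) 1,
    (∀ k i j, (∀ t, ContDiff ℝ 3 (fun x => Q k t x i j)) ∧
      ∀ n ≤ 3, LocParHolder α I
        (fun t x => iteratedFDeriv ℝ n (fun y => Q k t y i j) x)) ∧
    (∀ k j, (∀ t, ContDiff ℝ 3 (fun x => b k t x j)) ∧
      ∀ n ≤ 3, LocParHolder α I
        (fun t x => iteratedFDeriv ℝ n (fun y => b k t y j) x)) ∧
    (∀ k h, (∀ t, ContDiff ℝ 3 (fun x => c t x k h)) ∧
      ∀ n ≤ 3, LocParHolder α I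
        (fun t x => iteratedFDeriv ℝ n (fun y => c t y k h) x))) ∧
  -- (ii) and (iv): dissipativity of the drift and bounds on the derivatives
  (∃ r : Fin m → ℝ → Euc d → ℝ,
    (∀ k, ∀ t ∈ Icc s T, ∀ x : Euc d, ∀ ξ : Euc d,
      (∑ i, ∑ j, pd j (fun y => b k t y i) x * ξ j * ξ i) ≤ r k t x * ‖ξ‖ ^ 2) ∧
    (∃ b2 b3 : Fin m → ℝ → Euc d → ℝ, ∃ L B2 B3 MM : Fin m → ℝ,
      (∀ k t x, 0 < b2 k t x) ∧ (∀ k t x, 0 < b3 k t x) ∧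
      (∀ k, 0 < L k) ∧ (∀ k, 0 < B2 k) ∧ (∀ k, 0 < B3 k) ∧ (∀ k, 0 < MM k) ∧
      (∀ k j, ∀ t ∈ Ioc s T, ∀ x : Euc d,
        ‖iteratedFDeriv ℝ 2 (fun y => b k t y j) x‖ ≤ b2 k t x ∧
        ‖iteratedFDeriv ℝ 3 (fun y => b k t y j) x‖ ≤ b3 k t x) ∧
      (∀ k i j, ∀ t ∈ Ioc s T, ∀ x : Euc d, ∀ n, 1 ≤ n → n ≤ 3 →
        ‖iteratedFDeriv ℝ n (fun y => Q k t y i j) x‖ ≤ L k * minEig (Q k t x)) ∧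
      (∀ k, ∀ t ∈ Ioc s T, ∀ x : Euc d,
        r k t x + B2 k * b2 k t x + B3 k * b3 k t x ≤ MM k * minEig (Q k t x)))) ∧
  -- (iii): growth conditions
  (∃ C > (0:ℝ), ∀ k, ∀ t ∈ Icc s T, ∀ x : Euc d,
    (∀ i, |∑ j, Q k t x i j * x j| ≤ C * (1 + ‖x‖ ^ 2) * minEig (Q k t x)) ∧
    |∑ i, Q k t x i i| ≤ C * (1 + ‖x‖ ^ 2) * minEig (Q k t x) ∧
    (∑ j, b k t x j * x j) ≤ C * (1 + ‖x‖ ^ 2) * minEig (Q k t x)) ∧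
  -- (v): bounds on the derivatives of the potential
  (∃ ch : Fin m → ℕ → ℝ → Euc d → ℝ, ∃ Cbar > (0:ℝ),
    (∀ k n t x, 0 < ch k n t x) ∧
    (∀ k l, ∀ n, 1 ≤ n → n ≤ 3 → ∀ t ∈ Icc s T, ∀ x : Euc d,
      ‖iteratedFDeriv ℝ n (fun y => c t y k l) x‖ ≤ ch k n t x) ∧
    (∀ k, ∀ n, 1 ≤ n → n ≤ 3 → ∀ t ∈ Icc s T, ∀ x : Euc d,
      ch k n t x ≤ Cbar * (1 + |∑ j, CP c t x k j|)))

/-- `g ∈ C^k_b(ℝ^d;ℝ^m)` with all derivatives up to order `k` bounded by `B`. -/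
def CkBound (k : ℕ) (g : Euc d → Fin m → ℝ) (B : ℝ) : Prop :=
  ContDiff ℝ k g ∧ ∀ i ≤ k, ∀ x, ‖iteratedFDeriv ℝ i g x‖ ≤ B

/-- `g ∈ C^θ_b(ℝ^d;ℝ^m)` (`θ ≥ 0` real, possibly non-integer) with norm bounded by `B`:
derivatives up to order `⌊θ⌋` bounded by `B` and, if `θ` is not an integer, the
derivatives of order `⌊θ⌋` are globally `(θ-⌊θ⌋)`-Hölder with constant `B`. -/
def CthBound (θ : ℝ) (g : Euc d → Fin m → ℝ) (B : ℝ) : Prop :=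
  ContDiff ℝ (⌊θ⌋₊) g ∧
  (∀ i ≤ ⌊θ⌋₊, ∀ x, ‖iteratedFDeriv ℝ i g x‖ ≤ B) ∧
  (θ ≠ (⌊θ⌋₊ : ℝ) → ∀ x y : Euc d,
     ‖iteratedFDeriv ℝ (⌊θ⌋₊) g x - iteratedFDeriv ℝ (⌊θ⌋₊) g y‖ ≤
       B * ‖x - y‖ ^ (θ - (⌊θ⌋₊ : ℝ)))

/-- Classical solution of the autonomous Cauchy problem with the coefficients frozen
at time `tbar`. -/
def ClassicalSolFrozen (Q : Fin m → ℝ → Euc d → Fin d → Fin d → ℝ)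
    (b : Fin m → ℝ → Euc d → Fin d → ℝ)
    (c : ℝ → Euc d → Fin m → Fin m → ℝ)
    (tbar : ℝ) (f : Euc d → Fin m → ℝ) (u : ℝ → Euc d → Fin m → ℝ) : Prop :=
  ContinuousOn (fun p : ℝ × Euc d => u p.1 p.2) (Ici (0:ℝ) ×ˢ (univ : Set (Euc d))) ∧
  (∀ x, u 0 x = f x) ∧
  (∀ τ ∈ Ioi (0:ℝ), ∀ k, ContDiff ℝ 2 (fun x => u τ x k)) ∧
  (∀ τ ∈ Ioi (0:ℝ), ∀ x k, HasDerivAt (fun r => u r x k) (opA Q b c tbar (u τ) x k) τ)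

/-!
The proof is a weighted maximum principle for the frozen problems, with the Lyapunov function
`φ` of (H)(iii) as weight. Let `Λ > max(λ, M)`, where `M` bounds the row sums of `C^P`. If a
solution `v` satisfies `|v(0)| < a + Bφ`, then `|v(τ)| ≤ e^{Λτ}(a + Bφ)`: since `φ` blows up at
infinity, a violation would first occur at some `(τ₀, x₀)` and component `k₀`. There the time
derivative gives `∂_τ v_{k₀} ≥ Λ e^{Λτ₀}(a + Bφ_{k₀})`. The spatial maximum of `v_{k₀}` minus the
barrier gives `𝒜v_{k₀} ≤ 𝒜^P(barrier)_{k₀} ≤ e^{Λτ₀}(Bλφ_{k₀} + aM)`, and that is smaller.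
Apply this to `v = T_t(·)f_n - T_t(·)f`, with the same `φ` and `Λ` for all `t` in a bounded
interval. Since `(f_n)` is bounded and converges locally uniformly, and `φ` is large outside a
compact set, `|f_n - f| < η + ε₁φ` for all large `n`. Hence `|v| ≤ e^{Λτ}(η + ε₁φ)`, which is
small near any given point.
-/

theorem IsLocalMax.deriv_deriv_nonpos {f : ℝ → ℝ} {a : ℝ} (h : IsLocalMax f a)
    (hf : ContinuousAt f a) : deriv (deriv f) a ≤ 0 := by
  by_contra! hpos
  have hconst : f =ᶠ[𝓝 a] fun _ => f a :=
    ((isLocalMin_of_deriv_deriv_pos hpos h.deriv_eq_zero hf).and h).mono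
      fun x hx => le_antisymm hx.2 hx.1
  refine hpos.ne' ?_
  rw [hconst.deriv.deriv_eq]
  simp

theorem HasDerivAt.nonneg_of_le_left {f : ℝ → ℝ} {f' a b : ℝ} (hd : HasDerivAt f f' b)
    (hab : a < b) (hle : ∀ t ∈ Ioo a b, f t ≤ f b) : 0 ≤ f' := by
  refine ge_of_tendsto hd.tendsto_slope_zero_left ?_
  have hnear : ∀ᶠ t in 𝓝[<] (0:ℝ), a - b < t :=
    nhdsWithin_le_nhds (eventually_gt_nhds (by linarith))
  filter_upwards [hnear, self_mem_nhdsWithin] with t hat (ht : t < 0)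
  rw [smul_eq_mul]
  exact mul_nonneg_of_nonpos_of_nonpos (inv_nonpos.2 ht.le)
    (sub_nonpos.2 (hle _ ⟨by linarith, by linarith⟩))

lemma pd2_eq_fderiv_fderiv {f : Euc d → ℝ} (hf : ContDiff ℝ 2 f) (i j : Fin d) (x : Euc d) :
    pd2 i j f x = fderiv ℝ (fderiv ℝ f) x (EuclideanSpace.single i 1)
      (EuclideanSpace.single j 1) := by
  have hdiff : DifferentiableAt ℝ (fderiv ℝ f) x :=
    (hf.fderiv_right le_rfl).differentiable one_ne_zero x
  rw [pd2, show (fun y => pd j f y) = fun y => fderiv ℝ f y (EuclideanSpace.single j 1) from rfl,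
    fderiv_clm_apply hdiff (differentiableAt_const _)]
  simp

lemma fderiv_fderiv_apply_eq_sum_pd2 {f : Euc d → ℝ} (hf : ContDiff ℝ 2 f) (x u v : Euc d) :
    fderiv ℝ (fderiv ℝ f) x u v = ∑ i, ∑ j, u i * v j * pd2 i j f x := by
  have hexp : ∀ w : Euc d, w = ∑ i, w i • EuclideanSpace.single i (1:ℝ) := fun w => by
    simpa using ((EuclideanSpace.basisFun (Fin d) ℝ).sum_repr w).symm
  conv_lhs => rw [hexp u, hexp v]
  simp only [map_sum, map_smul, FunLike.coe_sum, FunLike.coe_smul, Finset.sum_apply,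
    Pi.smul_apply, smul_eq_mul, pd2_eq_fderiv_fderiv hf, Finset.mul_sum]
  rw [Finset.sum_comm]
  exact Finset.sum_congr rfl fun i _ => Finset.sum_congr rfl fun j _ => by ring

theorem IsLocalMax.sum_mul_pd2_nonpos {f : Euc d → ℝ} {x : Euc d} (h : IsLocalMax f x)
    (hf : ContDiff ℝ 2 f) (u : Euc d) : ∑ i, ∑ j, u i * u j * pd2 i j f x ≤ 0 := by
  set g : ℝ → ℝ := fun s => f (x + s • u)
  have hline : ∀ s, HasDerivAt (fun s : ℝ => x + s • u) u s := fun s => by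
    simpa using ((hasDerivAt_id s).smul_const u).const_add x
  have hg' : deriv g = fun s => fderiv ℝ f (x + s • u) u := funext fun s =>
    ((hf.differentiable two_ne_zero _).hasFDerivAt.comp_hasDerivAt s (hline s)).deriv
  have hg'' : deriv (deriv g) 0 = fderiv ℝ (fderiv ℝ f) x u u := by
    have hdiff : DifferentiableAt ℝ (fderiv ℝ f) x :=
      (hf.fderiv_right le_rfl).differentiable one_ne_zero x
    rw [hg']
    exact ((ContinuousLinearMap.apply ℝ ℝ u).hasFDerivAt.comp_hasDerivAt 0
      (hdiff.hasFDerivAt.comp_hasDerivAt_of_eq 0 (hline 0) (by simp))).deriv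
  have hgmax : IsLocalMax g 0 :=
    IsLocalMax.comp_continuous (by simpa using h) (hline 0).continuousAt
  rw [← fderiv_fderiv_apply_eq_sum_pd2 hf, ← hg'']
  exact hgmax.deriv_deriv_nonpos (hf.continuous.continuousAt.comp (hline 0).continuousAt)

lemma minEig_mul_norm_sq_le (A : Fin d → Fin d → ℝ) (ξ : Euc d) :
    minEig A * ‖ξ‖ ^ 2 ≤ ∑ i, ∑ j, A i j * ξ i * ξ j := by
  rcases eq_or_ne ξ 0 with rfl | hξ
  · simp
  set q : Euc d → ℝ := fun ζ => ∑ i, ∑ j, A i j * ζ i * ζ j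
  have hbdd : BddBelow {r : ℝ | ∃ ζ : Euc d, ‖ζ‖ = 1 ∧ r = q ζ} := by
    refine ((isCompact_sphere (0 : Euc d) 1).bddBelow_image
      (by fun_prop : Continuous q).continuousOn).mono ?_
    rintro r ⟨ζ, hζ, rfl⟩
    exact ⟨ζ, by simpa using hζ, rfl⟩
  have hn : 0 < ‖ξ‖ := norm_pos_iff.2 hξ
  have hunit : minEig A ≤ q (‖ξ‖⁻¹ • ξ) := csInf_le hbdd ⟨_, norm_smul_inv_norm hξ, rfl⟩
  have hscale : q (‖ξ‖⁻¹ • ξ) = (‖ξ‖ ^ 2)⁻¹ * q ξ := by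
    simp only [q, PiLp.smul_apply, smul_eq_mul, Finset.mul_sum]
    exact Finset.sum_congr rfl fun i _ => Finset.sum_congr rfl fun j _ => by ring
  rw [hscale, le_inv_mul_iff₀ (by positivity)] at hunit
  linarith

lemma posSemidef_of_minEig_nonneg {A : Fin d → Fin d → ℝ} (hsym : ∀ i j, A i j = A j i)
    (hA : 0 ≤ minEig A) : (Matrix.of A).PosSemidef := by
  refine .of_dotProduct_mulVec_nonneg (Matrix.IsHermitian.ext fun i j => by simp [hsym i j])
    fun x => ?_
  have := (mul_nonneg hA (sq_nonneg ‖WithLp.toLp 2 x‖)).trans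
    (minEig_mul_norm_sq_le A (WithLp.toLp 2 x))
  simpa [dotProduct, Matrix.mulVec, Finset.mul_sum, mul_comm, mul_left_comm] using this

lemma Matrix.PosSemidef.sum_mul_nonpos {n : Type*} [Fintype n] {A H : Matrix n n ℝ}
    (hA : A.PosSemidef) (hH : ∀ u : n → ℝ, ∑ i, ∑ j, u i * u j * H i j ≤ 0) :
    ∑ i, ∑ j, A i j * H i j ≤ 0 := by
  obtain ⟨r, v, rfl⟩ := Matrix.posSemidef_iff_eq_sum_vecMulVec.1 hA
  simp only [Matrix.sum_apply, Matrix.vecMulVec_apply, star_trivial, Finset.sum_mul]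
  rw [Finset.sum_congr rfl fun i _ => Finset.sum_comm, Finset.sum_comm]
  exact Finset.sum_nonpos fun l _ => hH (v l)

section LinearityOfOpA

variable {f g : Euc d → ℝ} (i j : Fin d) (x : Euc d)

lemma pd_sub (hf : Differentiable ℝ f) (hg : Differentiable ℝ g) :
    pd j (fun y => f y - g y) x = pd j f x - pd j g x := by
  simp [pd, fderiv_fun_sub (hf x) (hg x)]

lemma pd2_sub (hf : ContDiff ℝ 2 f) (hg : ContDiff ℝ 2 g) :
    pd2 i j (fun y => f y - g y) x = pd2 i j f x - pd2 i j g x := by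
  have hpd : ∀ {h : Euc d → ℝ}, ContDiff ℝ 2 h → Differentiable ℝ (pd j h) := fun hh =>
    ((hh.fderiv_right le_rfl).clm_apply contDiff_const).differentiable one_ne_zero
  rw [pd2, funext fun y => pd_sub j y (hf.differentiable two_ne_zero)
    (hg.differentiable two_ne_zero)]
  exact pd_sub i x (hpd hf) (hpd hg)

lemma pd_const_add_mul (a B : ℝ) : pd j (fun y => a + B * f y) x = B * pd j f x := by
  rw [pd, fderiv_const_add, show (fun y => B * f y) = B • f from rfl, fderiv_const_smul_field]
  rfl

lemma pd2_const_add_mul (a B : ℝ) : pd2 i j (fun y => a + B * f y) x = B * pd2 i j f x := by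
  rw [pd2, funext fun y => (pd_const_add_mul j y a B).trans (zero_add _).symm]
  exact pd_const_add_mul i x 0 B

lemma pd_neg : pd j (fun y => -f y) x = -pd j f x := by
  simp [pd, fderiv_fun_neg]

lemma pd2_neg : pd2 i j (fun y => -f y) x = -pd2 i j f x := by
  rw [pd2, funext fun y => pd_neg (f := f) j y]
  exact pd_neg i x

variable {x} {Q : Fin m → ℝ → Euc d → Fin d → Fin d → ℝ} {b : Fin m → ℝ → Euc d → Fin d → ℝ}
  {c : ℝ → Euc d → Fin m → Fin m → ℝ} {t : ℝ} {k : Fin m}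

lemma opA_sub {z₁ z₂ : Euc d → Fin m → ℝ} (h₁ : ∀ k, ContDiff ℝ 2 (fun y => z₁ y k))
    (h₂ : ∀ k, ContDiff ℝ 2 (fun y => z₂ y k)) :
    opA Q b c t (fun y k => z₁ y k - z₂ y k) x k = opA Q b c t z₁ x k - opA Q b c t z₂ x k := by
  simp only [opA, pd2_sub _ _ _ (h₁ k) (h₂ k),
    pd_sub _ _ ((h₁ k).differentiable two_ne_zero) ((h₂ k).differentiable two_ne_zero),
    mul_sub, Finset.sum_sub_distrib]
  ring

lemma opA_neg (z : Euc d → Fin m → ℝ) :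
    opA Q b c t (fun y k => -z y k) x k = -opA Q b c t z x k := by
  simp only [opA, pd2_neg, pd_neg, mul_neg, Finset.sum_neg_distrib]
  ring

lemma opA_const_add_mul (z : Euc d → Fin m → ℝ) (a B : ℝ) :
    opA Q b c t (fun y k => a + B * z y k) x k
      = B * opA Q b c t z x k + a * ∑ h, c t x k h := by
  simp only [opA, pd2_const_add_mul, pd_const_add_mul, mul_add, Finset.mul_sum,
    Finset.sum_add_distrib, mul_left_comm _ B, mul_comm _ a]
  ring

end LinearityOfOpA

lemma sum_mul_le_sum_CP_mul (c : ℝ → Euc d → Fin m → Fin m → ℝ) (t : ℝ) (x : Euc d)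
    {k : Fin m} {z ζ : Fin m → ℝ} (heq : z k = ζ k) (habs : ∀ h, |z h| ≤ ζ h) :
    ∑ h, c t x k h * z h ≤ ∑ h, CP c t x k h * ζ h := by
  refine Finset.sum_le_sum fun h _ => ?_
  rcases eq_or_ne k h with rfl | hkh
  · simp [CP, heq]
  · rw [CP, if_neg hkh]
    calc c t x k h * z h ≤ |c t x k h * z h| := le_abs_self _
      _ = |c t x k h| * |z h| := abs_mul _ _
      _ ≤ |c t x k h| * ζ h := mul_le_mul_of_nonneg_left (habs h) (abs_nonneg _)

lemma opA_le_opA_CP_of_touch {Q : Fin m → ℝ → Euc d → Fin d → Fin d → ℝ}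
    {b : Fin m → ℝ → Euc d → Fin d → ℝ} {c : ℝ → Euc d → Fin m → Fin m → ℝ} {t : ℝ}
    {z ζ : Euc d → Fin m → ℝ} {x₀ : Euc d} {k₀ : Fin m}
    (hQ : (Matrix.of (Q k₀ t x₀)).PosSemidef)
    (hz : ContDiff ℝ 2 (fun x => z x k₀)) (hζ : ContDiff ℝ 2 (fun x => ζ x k₀))
    (hle : ∀ x, z x k₀ ≤ ζ x k₀) (heq : z x₀ k₀ = ζ x₀ k₀) (habs : ∀ h, |z x₀ h| ≤ ζ x₀ h) :
    opA Q b c t z x₀ k₀ ≤ opA Q b (CP c) t ζ x₀ k₀ := by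
  set ψ : Euc d → ℝ := fun x => z x k₀ - ζ x k₀
  have hψ : ContDiff ℝ 2 ψ := hz.sub hζ
  have hmax : IsLocalMax ψ x₀ := Filter.Eventually.of_forall fun x => by
    simp only [ψ, heq, sub_self, sub_nonpos]; exact hle x
  have hgrad : ∀ j, pd j (fun x => z x k₀) x₀ = pd j (fun x => ζ x k₀) x₀ := fun j => by
    rw [← sub_eq_zero, ← pd_sub j x₀ (hz.differentiable two_ne_zero)
      (hζ.differentiable two_ne_zero), pd, hmax.fderiv_eq_zero]
    rfl
  have hsecond : ∑ i, ∑ j, Q k₀ t x₀ i j * pd2 i j ψ x₀ ≤ 0 :=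
    hQ.sum_mul_nonpos fun u => hmax.sum_mul_pd2_nonpos hψ (WithLp.toLp 2 u)
  simp only [ψ, pd2_sub _ _ _ hz hζ, mul_sub, Finset.sum_sub_distrib, sub_nonpos] at hsecond
  have hzero := sum_mul_le_sum_CP_mul c t x₀ heq habs
  simp only [opA, hgrad]
  linarith

lemma exists_first_zero {X ι : Type*} [TopologicalSpace X] [Finite ι] {g : ℝ → X → ι → ℝ}
    {T : ℝ} {K : Set X} (hK : IsCompact K)
    (hg : ∀ k, ContinuousOn (fun p : ℝ × X => g p.1 p.2 k) (Icc 0 T ×ˢ univ))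
    (hout : ∀ τ ∈ Icc 0 T, ∀ x ∉ K, ∀ k, g τ x k < 0) (h₀ : ∀ x k, g 0 x k < 0)
    {τ₁ : ℝ} {x₁ : X} {k₁ : ι} (hτ₁ : τ₁ ∈ Icc 0 T) (h₁ : 0 ≤ g τ₁ x₁ k₁) :
    ∃ τ₀ ∈ Ioc 0 T, ∃ x₀ k₀, g τ₀ x₀ k₀ = 0 ∧ ∀ τ ∈ Icc 0 τ₀, ∀ x k, g τ x k ≤ 0 := by
  set S : Set (ℝ × X) := ⋃ k, (Icc 0 T ×ˢ univ) ∩ (fun p => g p.1 p.2 k) ⁻¹' Ici 0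
  have hSclosed : IsClosed S := isClosed_iUnion_of_finite fun k =>
    (hg k).preimage_isClosed_of_isClosed (isClosed_Icc.prod isClosed_univ) isClosed_Ici
  have hSsub : S ⊆ Icc 0 T ×ˢ K := by
    simp only [S, iUnion_subset_iff]
    rintro k ⟨τ, x⟩ ⟨⟨hτ, -⟩, hnonneg⟩
    by_contra hx
    exact (hout τ hτ x (fun hxK => hx ⟨hτ, hxK⟩) k).not_ge hnonneg
  have hS : IsCompact S := (isCompact_Icc.prod hK).of_isClosed_subset hSclosed hSsub
  obtain ⟨⟨τ₀, x₀⟩, hp₀, hmin⟩ := hS.exists_isMinOn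
    ⟨(τ₁, x₁), mem_iUnion.2 ⟨k₁, ⟨hτ₁, mem_univ _⟩, h₁⟩⟩ continuous_fst.continuousOn
  obtain ⟨k₀, ⟨hτ₀, -⟩, hk₀ : 0 ≤ g τ₀ x₀ k₀⟩ := mem_iUnion.1 hp₀
  have hbefore : ∀ τ ∈ Ico 0 τ₀, ∀ x k, g τ x k < 0 := fun τ hτ x k => by
    by_contra! hnonneg
    have hmem : (τ, x) ∈ S :=
      mem_iUnion.2 ⟨k, ⟨⟨hτ.1, hτ.2.le.trans hτ₀.2⟩, mem_univ _⟩, hnonneg⟩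
    exact hτ.2.not_ge (hmin hmem)
  have hτ₀pos : 0 < τ₀ := hτ₀.1.lt_of_ne fun h => (h₀ x₀ k₀).not_ge (h ▸ hk₀)
  have hupto : ∀ τ ∈ Icc 0 τ₀, ∀ x k, g τ x k ≤ 0 := by
    intro τ hτ x k
    have hcont : ContinuousOn (fun τ => g τ x k) (Icc 0 τ₀) :=
      (hg k).comp (continuous_id.prodMk continuous_const).continuousOn
        fun σ hσ => ⟨⟨hσ.1, hσ.2.trans hτ₀.2⟩, mem_univ _⟩
    have hclosed := hcont.preimage_isClosed_of_isClosed isClosed_Icc (isClosed_Iic (a := 0))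
    have hsub : Ico 0 τ₀ ⊆ Icc 0 τ₀ ∩ (fun τ => g τ x k) ⁻¹' Iic 0 :=
      fun σ hσ => ⟨Ico_subset_Icc_self hσ, (hbefore σ hσ x k).le⟩
    rw [← closure_Ico hτ₀pos.ne] at hτ
    exact (hclosed.closure_subset_iff.2 hsub hτ).2
  exact ⟨τ₀, ⟨hτ₀pos, hτ₀.2⟩, x₀, k₀,
    le_antisymm (hupto τ₀ ⟨hτ₀pos.le, le_rfl⟩ x₀ k₀) hk₀, hupto⟩

lemma exists_isCompact_forall_lt_of_tendsto_cocompact {X ι : Type*} [TopologicalSpace X]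
    [Finite ι] {φ : X → ι → ℝ} (hφ : ∀ k, Tendsto (fun x => φ x k) (cocompact X) atTop)
    (R : ℝ) : ∃ K, IsCompact K ∧ ∀ x ∉ K, ∀ k, R < φ x k := by
  obtain ⟨K, hK, hsub⟩ := mem_cocompact.1
    (eventually_all.2 fun k => (hφ k).eventually_gt_atTop R)
  exact ⟨K, hK, fun x hx => hsub hx⟩

lemma ClassicalSolFrozen.sub {Q : Fin m → ℝ → Euc d → Fin d → Fin d → ℝ}
    {b : Fin m → ℝ → Euc d → Fin d → ℝ} {c : ℝ → Euc d → Fin m → Fin m → ℝ} {tb : ℝ}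
    {f₁ f₂ : Euc d → Fin m → ℝ} {u₁ u₂ : ℝ → Euc d → Fin m → ℝ}
    (h₁ : ClassicalSolFrozen Q b c tb f₁ u₁) (h₂ : ClassicalSolFrozen Q b c tb f₂ u₂) :
    ClassicalSolFrozen Q b c tb (fun x k => f₁ x k - f₂ x k)
      (fun τ x k => u₁ τ x k - u₂ τ x k) := by
  obtain ⟨hc₁, hi₁, hC₁, hd₁⟩ := h₁
  obtain ⟨hc₂, hi₂, hC₂, hd₂⟩ := h₂
  refine ⟨hc₁.sub hc₂, fun x => by simp [hi₁ x, hi₂ x],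
    fun τ hτ k => (hC₁ τ hτ k).sub (hC₂ τ hτ k), fun τ hτ x k => ?_⟩
  show HasDerivAt _ (opA Q b c tb (fun y k => u₁ τ y k - u₂ τ y k) x k) τ
  rw [opA_sub (hC₁ τ hτ) (hC₂ τ hτ)]
  exact (hd₁ τ hτ x k).sub (hd₂ τ hτ x k)

lemma BddOnStrips.sub {s : ℝ} {u₁ u₂ : ℝ → Euc d → Fin m → ℝ} (h₁ : BddOnStrips s u₁)
    (h₂ : BddOnStrips s u₂) : BddOnStrips s (fun τ x k => u₁ τ x k - u₂ τ x k) := by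
  intro T hT
  obtain ⟨K₁, hK₁⟩ := h₁ T hT
  obtain ⟨K₂, hK₂⟩ := h₂ T hT
  exact ⟨K₁ + K₂, fun τ hτ x k =>
    (abs_sub _ _).trans (add_le_add (hK₁ τ hτ x k) (hK₂ τ hτ x k))⟩

section MaximumPrinciple

variable {Q : Fin m → ℝ → Euc d → Fin d → Fin d → ℝ} {b : Fin m → ℝ → Euc d → Fin d → ℝ}
  {c : ℝ → Euc d → Fin m → Fin m → ℝ} {tb : ℝ} {φ : Euc d → Fin m → ℝ} {lam M Λ : ℝ}

lemma false_of_touches_barrier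
    (hQ : ∀ k x, (Matrix.of (Q k tb x)).PosSemidef)
    (hφC2 : ∀ k, ContDiff ℝ 2 (fun x => φ x k)) (hφpos : ∀ x k, 0 < φ x k)
    (hφlyap : ∀ x k, opA Q b (CP c) tb φ x k ≤ lam * φ x k)
    (hM : ∀ x k, ∑ j, CP c tb x k j ≤ M) (hlamΛ : lam < Λ) (hMΛ : M < Λ)
    {u : ℝ → Euc d → Fin m → ℝ} {τ₀ : ℝ} (hτ₀ : 0 < τ₀) {x₀ : Euc d} {k₀ : Fin m}
    (hu : ∀ k, ContDiff ℝ 2 (fun x => u τ₀ x k))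
    (hde : HasDerivAt (fun r => u r x₀ k₀) (opA Q b c tb (u τ₀) x₀ k₀) τ₀)
    {a B : ℝ} (ha : 0 < a) (hB : 0 ≤ B)
    (hle : ∀ τ ∈ Icc 0 τ₀, ∀ x k, |u τ x k| ≤ Real.exp (Λ * τ) * (a + B * φ x k))
    (heq : u τ₀ x₀ k₀ = Real.exp (Λ * τ₀) * (a + B * φ x₀ k₀)) : False := by
  set E := Real.exp (Λ * τ₀)
  have hE : 0 < E := Real.exp_pos _
  have htime : Λ * E * (a + B * φ x₀ k₀) ≤ opA Q b c tb (u τ₀) x₀ k₀ := by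
    have hbarrier : HasDerivAt (fun r => Real.exp (Λ * r) * (a + B * φ x₀ k₀))
        (Λ * E * (a + B * φ x₀ k₀)) τ₀ := by
      simpa [mul_comm] using
        (((hasDerivAt_id τ₀).const_mul Λ).exp.mul_const (a + B * φ x₀ k₀))
    refine sub_nonneg.1 ((hde.sub hbarrier).nonneg_of_le_left hτ₀ fun τ hτ => ?_)
    rw [Pi.sub_apply, Pi.sub_apply, heq, sub_self, sub_nonpos]
    exact (le_abs_self _).trans (hle τ (Ioo_subset_Icc_self hτ) x₀ k₀)
  set ζ : Euc d → Fin m → ℝ := fun x k => E * a + E * B * φ x k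
  have hζ : ∀ x k, Real.exp (Λ * τ₀) * (a + B * φ x k) = ζ x k := fun x k => by ring
  have hspace : opA Q b c tb (u τ₀) x₀ k₀ ≤ opA Q b (CP c) tb ζ x₀ k₀ := by
    refine opA_le_opA_CP_of_touch (hQ k₀ x₀) (hu k₀)
      (contDiff_const.add (contDiff_const.mul (hφC2 k₀))) (fun x => ?_) ((heq.trans (hζ _ _)))
      (fun h => (hle τ₀ ⟨hτ₀.le, le_rfl⟩ x₀ h).trans_eq (hζ _ _))
    exact (le_abs_self _).trans ((hle τ₀ ⟨hτ₀.le, le_rfl⟩ x k₀).trans_eq (hζ _ _))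
  have hlyap : opA Q b (CP c) tb ζ x₀ k₀ ≤ E * B * (lam * φ x₀ k₀) + E * a * M := by
    rw [opA_const_add_mul]
    gcongr
    · exact hφlyap x₀ k₀
    · exact hM x₀ k₀
  have hφ₀ := hφpos x₀ k₀
  nlinarith [mul_pos hE ha, mul_nonneg (mul_nonneg hE.le hB) hφ₀.le]

theorem ClassicalSolFrozen.abs_le_exp_mul
    (hQ : ∀ k x, (Matrix.of (Q k tb x)).PosSemidef)
    (hφC2 : ∀ k, ContDiff ℝ 2 (fun x => φ x k)) (hφpos : ∀ x k, 0 < φ x k)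
    (hφlyap : ∀ x k, opA Q b (CP c) tb φ x k ≤ lam * φ x k)
    (hM : ∀ x k, ∑ j, CP c tb x k j ≤ M) (hlamΛ : lam < Λ) (hMΛ : M < Λ)
    (hφcoc : ∀ k, Tendsto (fun x => φ x k) (cocompact (Euc d)) atTop)
    {g : Euc d → Fin m → ℝ} {v : ℝ → Euc d → Fin m → ℝ}
    (hv : ClassicalSolFrozen Q b c tb g v) {T Ks : ℝ}
    (hvb : ∀ τ ∈ Icc 0 T, ∀ x k, |v τ x k| ≤ Ks) (hΛ : 0 ≤ Λ) {a B : ℝ} (ha : 0 < a)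
    (hB : 0 < B) (hg : ∀ x k, |g x k| < a + B * φ x k) :
    ∀ τ ∈ Icc 0 T, ∀ x k, |v τ x k| ≤ Real.exp (Λ * τ) * (a + B * φ x k) := by
  obtain ⟨hcont, hinit, hC2, hde⟩ := hv
  by_contra! ⟨τ₁, hτ₁, x₁, k₁, hbad⟩
  have hw : ∀ τ ∈ Icc (0:ℝ) T, ∀ x k, a + B * φ x k ≤ Real.exp (Λ * τ) * (a + B * φ x k) :=
    fun τ hτ x k => le_mul_of_one_le_left (add_pos ha (mul_pos hB (hφpos x k))).le
      (Real.one_le_exp (mul_nonneg hΛ hτ.1))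
  have hgcont : ∀ k, ContinuousOn (fun p : ℝ × Euc d =>
      |v p.1 p.2 k| - Real.exp (Λ * p.1) * (a + B * φ p.2 k)) (Icc 0 T ×ˢ univ) := fun k =>
    (((continuous_apply k).comp_continuousOn
      (hcont.mono (prod_mono Icc_subset_Ici_self subset_rfl))).abs).sub
      (by have := (hφC2 k).continuous; fun_prop)
  obtain ⟨K, hK, hKφ⟩ := exists_isCompact_forall_lt_of_tendsto_cocompact hφcoc (Ks / B)
  have hout : ∀ τ ∈ Icc 0 T, ∀ x ∉ K, ∀ k,
      |v τ x k| - Real.exp (Λ * τ) * (a + B * φ x k) < 0 := fun τ hτ x hx k => by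
    have := (div_lt_iff₀' hB).1 (hKφ x hx k)
    linarith [hvb τ hτ x k, hw τ hτ x k]
  have hstart : ∀ x k, |v 0 x k| - Real.exp (Λ * 0) * (a + B * φ x k) < 0 := fun x k => by
    simpa [hinit] using hg x k
  obtain ⟨τ₀, hτ₀, x₀, k₀, htouch, hle⟩ := exists_first_zero hK hgcont hout hstart hτ₁
    (sub_nonneg.2 hbad.le)
  simp only [sub_eq_zero, sub_nonpos] at htouch hle
  rcases abs_choice (v τ₀ x₀ k₀) with hpos | hneg
  · exact false_of_touches_barrier hQ hφC2 hφpos hφlyap hM hlamΛ hMΛ hτ₀.1 (hC2 τ₀ hτ₀.1)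
      (hde τ₀ hτ₀.1 x₀ k₀) ha hB.le hle (hpos ▸ htouch)
  · refine false_of_touches_barrier hQ hφC2 hφpos hφlyap hM hlamΛ hMΛ (u := fun τ x k => -v τ x k)
      hτ₀.1 (fun k => (hC2 τ₀ hτ₀.1 k).neg) ?_ ha hB.le (by simpa only [abs_neg] using hle)
      (hneg ▸ htouch)
    rw [opA_neg]
    exact (hde τ₀ hτ₀.1 x₀ k₀).neg

end MaximumPrinciple

lemma TendstoLocallyUniformly.eventually_abs_sub_lt {X ι : Type*} [TopologicalSpace X]
    [LocallyCompactSpace X] [Fintype ι] {F : ℕ → X → ι → ℝ} {f : X → ι → ℝ}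
    (h : TendstoLocallyUniformly F f atTop) {G : ℝ} (hG : ∀ n y k, |F n y k - f y k| ≤ G)
    {φ : X → ι → ℝ} (hφ : ∀ k, Tendsto (fun y => φ y k) (cocompact X) atTop)
    (hφ₀ : ∀ y k, 0 ≤ φ y k) {η ε : ℝ} (hη : 0 < η) (hε : 0 < ε) :
    ∀ᶠ n in atTop, ∀ y k, |F n y k - f y k| < η + ε * φ y k := by
  obtain ⟨K, hK, hKφ⟩ := exists_isCompact_forall_lt_of_tendsto_cocompact hφ (G / ε)
  filter_upwards [Metric.tendstoUniformlyOn_iff.1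
    (tendstoLocallyUniformly_iff_forall_isCompact.1 h K hK) η hη] with n hn y k
  by_cases hy : y ∈ K
  · have hclose := (dist_le_pi_dist (f y) (F n y) k).trans_lt (hn y hy)
    rw [Real.dist_eq, abs_sub_comm] at hclose
    linarith [mul_nonneg hε.le (hφ₀ y k)]
  · linarith [(div_lt_iff₀' hε).1 (hKφ y hy k), hG n y k]

lemma Hyp.posSemidef {I : Set ℝ} {Q : Fin m → ℝ → Euc d → Fin d → Fin d → ℝ}
    {b : Fin m → ℝ → Euc d → Fin d → ℝ} {c : ℝ → Euc d → Fin m → Fin m → ℝ}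
    (hH : Hyp I Q b c) {t : ℝ} (ht : t ∈ I) (k : Fin m) (x : Euc d) :
    (Matrix.of (Q k t x)).PosSemidef := by
  obtain ⟨μ₀, hμ₀, hμ⟩ := hH.ellipt {t} (singleton_subset_iff.2 ht)
    Bornology.isBounded_singleton k
  exact posSemidef_of_minEig_nonneg (hH.symm k t x) (hμ₀.le.trans (hμ t rfl x))

lemma Hyp.exists_weighted_estimate {I : Set ℝ} {Q : Fin m → ℝ → Euc d → Fin d → Fin d → ℝ}
    {b : Fin m → ℝ → Euc d → Fin d → ℝ} {c : ℝ → Euc d → Fin m → Fin m → ℝ}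
    (hH : Hyp I Q b c) {J : Set ℝ} (hJI : J ⊆ I) (hJ : Bornology.IsBounded J) :
    ∃ φ : Euc d → Fin m → ℝ, ∃ Λ : ℝ, 0 ≤ Λ ∧ Continuous φ ∧ (∀ x k, 0 < φ x k) ∧
      (∀ k, Tendsto (fun x => φ x k) (cocompact (Euc d)) atTop) ∧
      ∀ t ∈ J, ∀ g v, ClassicalSolFrozen Q b c t g v → BddOnStrips 0 v →
        ∀ a B : ℝ, 0 < a → 0 < B → (∀ x k, |g x k| < a + B * φ x k) →
        ∀ τ ≥ 0, ∀ x k, |v τ x k| ≤ Real.exp (Λ * τ) * (a + B * φ x k) := by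
  obtain ⟨φ, lam, hlam, hφC2, hφpos, hφcoc, hφlyap⟩ := hH.lyap J hJI hJ
  obtain ⟨M, hM⟩ := hH.rowBdd J hJI hJ
  refine ⟨φ, max lam M + 1, by positivity, continuous_pi fun k => (hφC2 k).continuous, hφpos,
    hφcoc, fun t ht g v hv hvb a B ha hB hg τ hτ => ?_⟩
  obtain ⟨Ks, hKs⟩ := hvb (τ + 1) (by linarith)
  exact hv.abs_le_exp_mul (hH.posSemidef (hJI ht)) hφC2 hφpos (hφlyap t ht) (hM t ht)
    (by linarith [le_max_left lam M]) (by linarith [le_max_right lam M]) hφcoc hKs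
    (by positivity) ha hB hg τ ⟨hτ, by linarith⟩

theorem statement_10_general {d m : ℕ}
    (I : Set ℝ)
    (Q : Fin m → ℝ → Euc d → Fin d → Fin d → ℝ)
    (b : Fin m → ℝ → Euc d → Fin d → ℝ)
    (c : ℝ → Euc d → Fin m → Fin m → ℝ)
    (hH : Hyp I Q b c)
    (fseq : ℕ → Euc d → Fin m → ℝ)
    (hfb : ∃ K, ∀ n (x : Euc d) k, |fseq n x k| ≤ K)
    (f : Euc d → Fin m → ℝ) (hf : IsBddContinuous f)
    (hconv : TendstoLocallyUniformly (fun n (x : Euc d) => fseq n x) f atTop)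
    (Useq : ℕ → ℝ → ℝ → Euc d → Fin m → ℝ)
    (hUseq : ∀ n, ∀ t ∈ I,
      ClassicalSolFrozen Q b c t (fseq n) (Useq n t) ∧ BddOnStrips 0 (Useq n t))
    (U : ℝ → ℝ → Euc d → Fin m → ℝ)
    (hU : ∀ t ∈ I, ClassicalSolFrozen Q b c t f (U t) ∧ BddOnStrips 0 (U t)) :
    TendstoLocallyUniformlyOn
      (fun n (p : ℝ × ℝ × Euc d) => Useq n p.1 p.2.1 p.2.2)
      (fun p : ℝ × ℝ × Euc d => U p.1 p.2.1 p.2.2)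
      atTop (I ×ˢ (Ioi (0:ℝ) ×ˢ (univ : Set (Euc d)))) := by
  rw [tendstoLocallyUniformlyOn_iff]
  rintro ε hε ⟨t, τ, x⟩ -
  obtain ⟨φ, Λ, hΛ, hφ, hφpos, hφcoc, hest⟩ := hH.exists_weighted_estimate
    (J := I ∩ Icc (t - 1) (t + 1)) inter_subset_left
    ((Metric.isBounded_Icc _ _).subset inter_subset_right)
  obtain ⟨Kf, hKf⟩ := hfb
  obtain ⟨-, F, hF⟩ := hf
  set E := Real.exp (Λ * (τ + 1))
  set η := ε / (4 * E)
  have hη : 0 < η := by positivity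
  set ε₁ := η / (‖φ x‖ + 1)
  have hε₁ : 0 < ε₁ := by positivity
  have hdata := hconv.eventually_abs_sub_lt (fun n y k => (abs_sub _ _).trans
    (add_le_add (hKf n y k) (hF y k))) hφcoc (fun y k => (hφpos y k).le) hη hε₁
  have hnhds : Ioo (t - 1) (t + 1) ×ˢ (Iio (τ + 1) ×ˢ {y | ‖φ y‖ < ‖φ x‖ + 1}) ∈ 𝓝 (t, τ, x) :=
    (isOpen_Ioo.prod (isOpen_Iio.prod (isOpen_lt hφ.norm continuous_const))).mem_nhds
      ⟨⟨sub_one_lt t, lt_add_one t⟩, lt_add_one τ, lt_add_one ‖φ x‖⟩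
  refine ⟨_, inter_mem_nhdsWithin _ hnhds, ?_⟩
  filter_upwards [hdata] with n hn
  rintro ⟨t', τ', x'⟩ ⟨⟨ht'I, hτ'0 : 0 < τ', -⟩, ht', hτ' : τ' < τ + 1, hx' : ‖φ x'‖ < _⟩
  have hbound := hest t' ⟨ht'I, Ioo_subset_Icc_self ht'⟩ _ _
    ((hUseq n t' ht'I).1.sub (hU t' ht'I).1) ((hUseq n t' ht'I).2.sub (hU t' ht'I).2) η ε₁
    hη hε₁ hn τ' hτ'0.le x'
  refine (dist_pi_lt_iff hε).2 fun k => ?_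
  have hφx' : φ x' k ≤ ‖φ x‖ + 1 :=
    (le_abs_self _).trans ((norm_le_pi_norm (φ x') k).trans hx'.le)
  rw [Real.dist_eq, abs_sub_comm]
  calc |Useq n t' τ' x' k - U t' τ' x' k|
      ≤ Real.exp (Λ * τ') * (η + ε₁ * φ x' k) := hbound k
    _ ≤ E * (η + ε₁ * (‖φ x‖ + 1)) := by
        have := hφpos x' k
        gcongr
        exact Real.exp_le_exp.2 (by gcongr)
    _ = ε / 2 := by
        have hE : E ≠ 0 := (Real.exp_pos _).ne'
        simp only [η, ε₁]; field_simp; norm_num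
    _ < ε := half_lt_self hε

/-- Theorem 4.1(ii): if `f_n → f` locally uniformly and `(f_n)` is bounded,
then `(t,τ,x) ↦ (T_t(τ)f_n)(x)` converges to `(t,τ,x) ↦ (T_t(τ)f)(x)` locally uniformly
on `I × (0,∞) × ℝ^d`. -/
theorem statement_10 {d m : ℕ} (hd : 1 ≤ d) (hm : 2 ≤ m)
    (I : Set ℝ) (hI : IsRightHalfline I)
    (Q : Fin m → ℝ → Euc d → Fin d → Fin d → ℝ)
    (b : Fin m → ℝ → Euc d → Fin d → ℝ)
    (c : ℝ → Euc d → Fin m → Fin m → ℝ)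
    (hH : Hyp I Q b c)
    (hH' : ∀ s T : ℝ, s ∈ I → T ∈ I → s < T → HypPrime I Q b c s T)
    (fseq : ℕ → Euc d → Fin m → ℝ)
    (hfc : ∀ n, Continuous (fseq n))
    (hfb : ∃ K, ∀ n (x : Euc d) k, |fseq n x k| ≤ K)
    (f : Euc d → Fin m → ℝ) (hf : IsBddContinuous f)
    (hconv : TendstoLocallyUniformly (fun n (x : Euc d) => fseq n x) f atTop)
    (Useq : ℕ → ℝ → ℝ → Euc d → Fin m → ℝ)
    (hUseq : ∀ n, ∀ t ∈ I,
      ClassicalSolFrozen Q b c t (fseq n) (Useq n t) ∧ BddOnStrips 0 (Useq n t))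
    (U : ℝ → ℝ → Euc d → Fin m → ℝ)
    (hU : ∀ t ∈ I, ClassicalSolFrozen Q b c t f (U t) ∧ BddOnStrips 0 (U t)) :
    TendstoLocallyUniformlyOn
      (fun n (p : ℝ × ℝ × Euc d) => Useq n p.1 p.2.1 p.2.2)
      (fun p : ℝ × ℝ × Euc d => U p.1 p.2.1 p.2.2)
      atTop (I ×ˢ (Ioi (0:ℝ) ×ˢ (univ : Set (Euc d)))) :=
  statement_10_general I Q b c hH fseq hfb f hf hconv Useq hUseq U hU
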